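/- arXiv:1905.09175 — 5 statements merged into one kernel-verified Lean document; each statement's English description precedes it below -/
import Mathlib

section
/- If M is a matching in a graph G such that G admits no M-augmenting path of length at most 2k−1, then |M| ≥ (k/(k+1))·|M*| for every matching M* of G; in particular a matching with no augmenting path of length ≤ 3 is a 3/2-approximate maximum matching. -/
/-- A matching: a set of edges of `G` that are pairwise vertex-disjoint. -/
def IsMatching {V : Type*} (G : SimpleGraph V) (M : Finset (Sym2 V)) : Prop :=
  (∀ e ∈ M, e ∈ G.edgeSet) ∧
  (∀ e ∈ M, ∀ f ∈ M, e ≠ f → ∀ x : V, x ∈ e → x ∉ f)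

/-- `v` is unmatched by `M`. -/
def Unmatched {V : Type*} (M : Finset (Sym2 V)) (v : V) : Prop := ∀ e ∈ M, v ∉ e

/-!
In `M ∆ M'` every vertex has degree at most two. Starting at a vertex `u` covered by `M'` but not
by `M` and walking along `M ∆ M'` as long as possible gives a path that is a whole component of
`M ∆ M'`; it alternates automatically, and its interior vertices are covered by both matchings.
Either it ends at another `M`-unmatched vertex, and is then an augmenting path, of odd length at
least `2k + 1`, with at least `2k` interior vertices; or it ends at a vertex covered by `M` only.
Two such paths are disjoint unless they are one path read from both ends. Writing `A`, `D`, `S`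
for the vertices covered by `M'` only, by `M` only, and by both, counting gives
`k |A| ≤ k |D| + |S|`; together with `2 |M'| = |A| + |S|`, `2 |M| = |D| + |S|` this is
`2k |M'| ≤ 2k |M| + |S| ≤ 2 (k + 1) |M|`.
-/

open Finset SimpleGraph

theorem List.IsChain.getLast_iff_even {α : Type*} {P : α → Prop} :
    ∀ {a : α} {l : List α}, (a :: l).IsChain (fun x y => P x ↔ ¬ P y) →
      (P ((a :: l).getLast (cons_ne_nil a l)) ↔ (P a ↔ Even l.length))
  | a, [], _ => by simp
  | a, b :: l, h => by
    rw [List.isChain_cons_cons] at h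
    rw [List.getLast_cons_cons, h.2.getLast_iff_even, List.length_cons, Nat.even_add_one]
    tauto

namespace SimpleGraph

variable {V : Type*} {H : SimpleGraph V}

lemma Reachable.mem_of_forall_adj_mem {s : Set V} (hs : ∀ x ∈ s, ∀ y, H.Adj x y → y ∈ s)
    {a b : V} (hab : H.Reachable a b) (ha : a ∈ s) : b ∈ s := by
  obtain ⟨p⟩ := hab
  induction p with
  | nil => exact ha
  | cons h q ih => exact ih (hs _ ha _ h)

namespace Walk

lemma IsPath.eq_mk_start_snd_of_mem_edges {v w : V} {p : H.Walk v w} (hp : p.IsPath)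
    {e : Sym2 V} (he : e ∈ p.edges) (hv : v ∈ e) : e = s(v, p.snd) := by
  cases p with
  | nil => simp at he
  | cons h q =>
    rw [edges_cons, List.mem_cons] at he
    rcases he with rfl | he
    · rw [snd_cons]
    · exact absurd (q.mem_support_of_mem_edges he hv) ((cons_isPath_iff h q).mp hp).2

lemma IsPath.not_subsingleton_neighborSet {u v z : V} {p : H.Walk u v} (hp : p.IsPath)
    (hz : z ∈ p.support) (hzu : z ≠ u) (hzv : z ≠ v) : ¬ (H.neighborSet z).Subsingleton := by
  induction p with
  | nil => exact absurd (List.mem_singleton.mp hz) hzu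
  | @cons u a v h q ih =>
    rw [cons_isPath_iff] at hp
    have hzq : z ∈ q.support := (List.mem_cons.mp hz).resolve_left hzu
    by_cases hza : z = a
    · subst hza
      cases q with
      | nil => exact absurd rfl hzv
      | cons h' r =>
        intro hsub
        apply hp.2
        rw [hsub (H.mem_neighborSet _ _ |>.mpr h.symm) (H.mem_neighborSet _ _ |>.mpr h')]
        simp
    · exact ih hp.1 hzq hza hzv

lemma IsPath.isChain_edges {R : Sym2 V → Sym2 V → Prop}
    (hR : ∀ x v y, H.Adj x v → H.Adj v y → x ≠ y → R s(x, v) s(v, y)) {u w : V}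
    {p : H.Walk u w} (hp : p.IsPath) : p.edges.IsChain R := by
  induction p with
  | nil => simp
  | @cons u a w h q ih =>
    rw [cons_isPath_iff] at hp
    cases q with
    | nil => simp
    | cons h' r =>
      rw [edges_cons, edges_cons, List.isChain_cons_cons]
      exact ⟨hR _ _ _ h h' fun hub => hp.2 (by simp [hub]), by simpa using ih hp.1⟩

lemma odd_length_of_isChain {P : Sym2 V → Prop} {u w : V} (p : H.Walk u w) (huw : u ≠ w)
    (hchain : p.edges.IsChain (fun e f => P e ↔ ¬ P f))
    (hu : ∀ e ∈ p.edges, u ∈ e → ¬ P e) (hw : ∀ e ∈ p.edges, w ∈ e → ¬ P e) :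
    Odd p.length := by
  cases p with
  | nil => exact absurd rfl huw
  | @cons u a w h q =>
    rw [edges_cons] at hchain hu hw
    have hlast : (s(u, a) :: q.edges).getLast (List.cons_ne_nil _ _) =
        s((cons h q).penultimate, w) :=
      (cons h q).getLast_edges_eq_mk_penultimate_end _
    have hu' := hu _ List.mem_cons_self (Sym2.mem_mk_left _ _)
    have hw' := hw _ (List.getLast_mem _) (hlast ▸ Sym2.mem_mk_right _ _)
    have hparity := hchain.getLast_iff_even
    rw [length_cons, Nat.odd_add_one, Nat.not_odd_iff_even, ← length_edges]
    tauto

lemma IsPath.length_le_card_inter_add_one [DecidableEq V] {u w : V} {p : H.Walk u w}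
    (hp : p.IsPath) {S : Finset V} (hS : ∀ z ∈ p.support, z ≠ u → z ≠ w → z ∈ S) :
    p.length ≤ #(S ∩ p.support.toFinset) + 1 := by
  have hcard : #p.support.toFinset = p.length + 1 := by
    rw [List.toFinset_card_of_nodup hp.support_nodup, length_support]
  have hsub : p.support.toFinset ⊆ (S ∩ p.support.toFinset) ∪ {u, w} := by
    intro z hz
    by_cases hzu : z = u
    · simp [hzu]
    by_cases hzw : z = w
    · simp [hzw]
    exact mem_union_left _ (mem_inter.mpr ⟨hS z (List.mem_toFinset.mp hz) hzu hzw, hz⟩)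
  have := (card_le_card hsub).trans (card_union_le _ _)
  have := card_le_two (a := u) (b := w)
  omega

lemma IsPath.disjoint_support_of_subsingleton_neighborSet [DecidableEq V] {a b c d : V}
    {p : H.Walk a b} (hp : p.IsPath) (hclosed : ∀ x ∈ p.support, ∀ y, H.Adj x y → y ∈ p.support)
    (q : H.Walk c d) (hd : (H.neighborSet d).Subsingleton) (hda : d ≠ a) (hdb : d ≠ b) :
    Disjoint p.support.toFinset q.support.toFinset := by
  refine Finset.disjoint_left.mpr fun z hzp hzq => ?_
  have hdp : d ∈ p.support :=
    Reachable.mem_of_forall_adj_mem hclosed ⟨q.dropUntil z (List.mem_toFinset.mp hzq)⟩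
      (List.mem_toFinset.mp hzp)
  exact hp.not_subsingleton_neighborSet hdp hda hdb hd

end Walk

open Walk in
theorem exists_path_to_leaf_of_path [Fintype V]
    (hdeg : ∀ v x y z, H.Adj v x → H.Adj v y → H.Adj v z → x = y ∨ x = z ∨ y = z)
    {u v : V} (p : H.Walk v u) (hp : p.IsPath) (hnil : ¬ p.Nil)
    (hclosed : ∀ z ∈ p.support, z ≠ v → ∀ y, H.Adj z y → s(y, z) ∈ p.edges) :
    ∃ (w : V) (q : H.Walk w u), q.IsPath ∧ ¬ q.Nil ∧ (H.neighborSet w).Subsingleton ∧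
      ∀ z ∈ q.support, ∀ y, H.Adj z y → y ∈ q.support := by
  by_cases hleaf : ∀ y, H.Adj v y → y = p.snd
  · refine ⟨v, p, hp, hnil, fun x hx y hy => (hleaf x hx).trans (hleaf y hy).symm, ?_⟩
    intro z hz y hzy
    by_cases hzv : z = v
    · subst hzv
      exact hleaf y hzy ▸ p.snd_mem_support_of_mem_edges (mk_start_snd_mem_edges hnil)
    · exact p.fst_mem_support_of_mem_edges (hclosed z hz hzv y hzy)
  push Not at hleaf
  obtain ⟨x, hvx, hx⟩ := hleaf
  -- An edge `s(v, x)` of `p` would be a second edge of `p` at its start `v`.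
  have hxp : x ∉ p.support := fun hxp => hx <| Sym2.congr_right.mp <|
    hp.eq_mk_start_snd_of_mem_edges (hclosed x hxp hvx.ne' v hvx.symm) (Sym2.mem_mk_left _ _)
  have hp' : (cons hvx.symm p).IsPath := (cons_isPath_iff _ _).mpr ⟨hp, hxp⟩
  have := hp'.length_lt
  refine exists_path_to_leaf_of_path hdeg (cons hvx.symm p) hp' not_nil_cons ?_
  intro z hz hzx y hzy
  rw [support_cons, List.mem_cons] at hz
  rw [edges_cons, List.mem_cons]
  by_cases hzv : z = v
  · subst hzv
    rcases hdeg z x p.snd y hvx (adj_snd hnil) hzy with h | rfl | rfl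
    · exact absurd h hx
    · exact Or.inl rfl
    · exact Or.inr (Sym2.eq_swap ▸ mk_start_snd_mem_edges hnil)
  · exact Or.inr (hclosed z (hz.resolve_left hzx) hzv y hzy)
termination_by Fintype.card V - p.length
decreasing_by rw [Walk.length_cons] at this ⊢; omega

theorem exists_path_to_leaf [Fintype V]
    (hdeg : ∀ v x y z, H.Adj v x → H.Adj v y → H.Adj v z → x = y ∨ x = z ∨ y = z)
    {u a : V} (hua : H.Adj u a) (hu : (H.neighborSet u).Subsingleton) :
    ∃ (w : V) (q : H.Walk w u), q.IsPath ∧ ¬ q.Nil ∧ (H.neighborSet w).Subsingleton ∧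
      ∀ z ∈ q.support, ∀ y, H.Adj z y → y ∈ q.support := by
  refine exists_path_to_leaf_of_path hdeg (.cons hua.symm .nil) (by simp [hua.ne'])
    Walk.not_nil_cons ?_
  intro z hz hza y hzy
  obtain rfl : z = u := by simpa [hza] using hz
  rw [hu hzy hua]
  simp

end SimpleGraph

/- Think of `T u` as the vertex set of a path joining `u` to its partner `w u`: a vertex of `S`
lies on at most two of these paths, namely on one path read from both of its ends. -/
theorem mul_card_le_of_pairing {α : Type*} [DecidableEq α] {A D S : Finset α} {w : α → α}
    {T : α → Finset α} (k : ℕ) (hw : ∀ u ∈ A, w u ≠ u) (hwT : ∀ u ∈ A, w u ∈ T u)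
    (hwD : ∀ u ∈ A, w u ∉ A → w u ∈ D) (hT : ∀ u ∈ A, w u ∈ A → 2 * k ≤ #(S ∩ T u))
    (hdisj : ∀ u ∈ A, ∀ u' ∈ A, u' ≠ u → u' ≠ w u → Disjoint (T u) (T u')) :
    k * #A ≤ k * #D + #S := by
  have hmem : ∀ u ∈ A, ∀ u' ∈ A, ∀ x ∈ T u, x ∈ T u' → u' = u ∨ u' = w u := by
    intro u hu u' hu' x hx hx'
    by_contra! h
    exact Finset.disjoint_left.mp (hdisj u hu u' hu' h.1 h.2) hx hx'
  set B := {u ∈ A | w u ∈ A}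
  set C := {u ∈ A | w u ∉ A}
  have hC : #C ≤ #D := by
    refine card_le_card_of_injOn w (fun u hu => ?_) fun u hu u' hu' huu' => ?_
    · obtain ⟨hu, hwu⟩ := mem_filter.mp hu
      exact hwD u hu hwu
    · have hu := (mem_filter.mp hu).1
      have hu' := (mem_filter.mp hu').1
      refine ((hmem u hu u' hu' (w u) (hwT u hu) (huu' ▸ hwT u' hu')).resolve_right ?_).symm
      exact fun h => hw u' hu' (huu' ▸ h).symm
  have hB : #B * (2 * k) ≤ #S * 2 := calc
    #B * (2 * k) ≤ ∑ u ∈ B, #(S ∩ T u) := by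
      simpa using card_nsmul_le_sum B _ _ fun u hu => hT u (mem_filter.mp hu).1 (mem_filter.mp hu).2
    _ = ∑ x ∈ S, #{u ∈ B | x ∈ T u} := by
      simp_rw [← filter_mem_eq_inter, card_eq_sum_ones, sum_filter]
      exact sum_comm
    _ ≤ #S * 2 := by
      refine (sum_le_card_nsmul S _ 2 fun x _ => ?_).trans_eq (smul_eq_mul _ _)
      obtain ⟨u₀, hu₀⟩ | hempty := (filter (fun u => x ∈ T u) B).eq_empty_or_nonempty.symm
      · refine le_trans (card_le_card (t := {u₀, w u₀}) fun u hu => ?_) card_le_two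
        obtain ⟨hu₀B, hx₀⟩ := mem_filter.mp hu₀
        obtain ⟨huB, hx⟩ := mem_filter.mp hu
        rcases hmem u₀ (mem_filter.mp hu₀B).1 u (mem_filter.mp huB).1 x hx₀ hx with rfl | rfl <;>
          simp
      · simp [hempty]
  have hBC : #B + #C = #A := card_filter_add_card_filter_not _
  nlinarith

section Matching

variable {V : Type*} {G : SimpleGraph V} {M M' : Finset (Sym2 V)}

lemma IsMatching.eq_of_mem_of_mem (hM : IsMatching G M) {e f : Sym2 V} (he : e ∈ M)
    (hf : f ∈ M) {v : V} (hve : v ∈ e) (hvf : v ∈ f) : e = f :=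
  by_contra fun hef => hM.2 e he f hf hef v hve hvf

def coverVerts [DecidableEq V] (M : Finset (Sym2 V)) : Finset V := M.biUnion Sym2.toFinset

lemma mem_coverVerts [DecidableEq V] {v : V} : v ∈ coverVerts M ↔ ∃ e ∈ M, v ∈ e := by
  simp [coverVerts]

lemma unmatched_iff_notMem_coverVerts [DecidableEq V] {v : V} :
    Unmatched M v ↔ v ∉ coverVerts M := by
  simp [Unmatched, mem_coverVerts]

lemma IsMatching.card_coverVerts [DecidableEq V] (hM : IsMatching G M) :
    #(coverVerts M) = 2 * #M := by
  rw [coverVerts, card_biUnion, sum_const_nat fun e he =>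
    Sym2.card_toFinset_of_not_isDiag e (G.not_isDiag_of_mem_edgeSet (hM.1 e he)), mul_comm]
  intro e he f hf hef
  exact Finset.disjoint_left.mpr fun v hve hvf =>
    hM.2 e he f hf hef v (Sym2.mem_toFinset.mp hve) (Sym2.mem_toFinset.mp hvf)

def symmDiffGraph (M M' : Finset (Sym2 V)) : SimpleGraph V :=
  fromEdgeSet (symmDiff (M : Set (Sym2 V)) M')

lemma symmDiffGraph_adj {v w : V} : (symmDiffGraph M M').Adj v w ↔
    ((s(v, w) ∈ M ∧ s(v, w) ∉ M') ∨ (s(v, w) ∈ M' ∧ s(v, w) ∉ M)) ∧ v ≠ w := by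
  simp [symmDiffGraph, Set.mem_symmDiff]

lemma symmDiffGraph_comm : symmDiffGraph M M' = symmDiffGraph M' M := by
  rw [symmDiffGraph, symmDiff_comm, symmDiffGraph]

lemma symmDiffGraph_le (hM : IsMatching G M) (hM' : IsMatching G M') :
    symmDiffGraph M M' ≤ G := fun _ _ h => by
  rcases (symmDiffGraph_adj.mp h).1 with h | h
  exacts [hM.1 _ h.1, hM'.1 _ h.1]

lemma symmDiffGraph_mk_mem_iff (hM : IsMatching G M) (hM' : IsMatching G M') {v x y : V}
    (hx : (symmDiffGraph M M').Adj v x) (hy : (symmDiffGraph M M').Adj v y) (hxy : x ≠ y) :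
    s(v, x) ∈ M ↔ s(v, y) ∉ M := by
  have hne : ∀ {N}, IsMatching G N → s(v, x) ∈ N → s(v, y) ∉ N := fun hN hxN hyN =>
    hxy <| Sym2.congr_right.mp <|
      hN.eq_of_mem_of_mem hxN hyN (Sym2.mem_mk_left _ _) (Sym2.mem_mk_left _ _)
  rw [symmDiffGraph_adj] at hx hy
  constructor
  · exact hne hM
  · intro hyM
    by_contra hxM
    exact hne hM' (by tauto) (by tauto)

lemma symmDiffGraph_eq_or_eq_or_eq (hM : IsMatching G M) (hM' : IsMatching G M') {v x y z : V}
    (hx : (symmDiffGraph M M').Adj v x) (hy : (symmDiffGraph M M').Adj v y)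
    (hz : (symmDiffGraph M M').Adj v z) : x = y ∨ x = z ∨ y = z := by
  by_contra! h
  have := symmDiffGraph_mk_mem_iff hM hM' hx hy h.1
  have := symmDiffGraph_mk_mem_iff hM hM' hx hz h.2.1
  have := symmDiffGraph_mk_mem_iff hM hM' hy hz h.2.2
  tauto

lemma symmDiffGraph_isChain_edges (hM : IsMatching G M) (hM' : IsMatching G M') {u w : V}
    {p : (symmDiffGraph M M').Walk u w} (hp : p.IsPath) :
    p.edges.IsChain (fun e f => e ∈ M ↔ f ∉ M) :=
  hp.isChain_edges fun _ _ _ hxv hvy hxy => by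
    rw [Sym2.eq_swap]
    exact symmDiffGraph_mk_mem_iff hM hM' hxv.symm hvy hxy

lemma symmDiffGraph_mem_inter_of_not_subsingleton [DecidableEq V] (hM : IsMatching G M)
    (hM' : IsMatching G M') {v : V} (hv : ¬ ((symmDiffGraph M M').neighborSet v).Subsingleton) :
    v ∈ coverVerts M ∩ coverVerts M' := by
  obtain ⟨x, hx, y, hy, hxy⟩ := Set.not_subsingleton_iff.mp hv
  have hiff := symmDiffGraph_mk_mem_iff hM hM' hx hy hxy
  rw [mem_neighborSet, symmDiffGraph_adj] at hx hy
  simp only [mem_inter, mem_coverVerts]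
  by_cases hxM : s(v, x) ∈ M
  · exact ⟨⟨_, hxM, Sym2.mem_mk_left _ _⟩, ⟨s(v, y), by tauto, Sym2.mem_mk_left _ _⟩⟩
  · exact ⟨⟨_, by tauto, Sym2.mem_mk_left _ _⟩, ⟨s(v, x), by tauto, Sym2.mem_mk_left _ _⟩⟩

lemma symmDiffGraph_mk_mem_of_notMem_coverVerts [DecidableEq V] {v y : V}
    (hv : v ∉ coverVerts M) (hvy : (symmDiffGraph M M').Adj v y) : s(v, y) ∈ M' := by
  have hvM : s(v, y) ∉ M := fun h => hv (mem_coverVerts.mpr ⟨_, h, Sym2.mem_mk_left _ _⟩)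
  have := symmDiffGraph_adj.mp hvy
  tauto

lemma symmDiffGraph_subsingleton_neighborSet_of_notMem [DecidableEq V]
    (hM' : IsMatching G M') {v : V} (hv : v ∉ coverVerts M) :
    ((symmDiffGraph M M').neighborSet v).Subsingleton := fun _ hx _ hy =>
  Sym2.congr_right.mp <| hM'.eq_of_mem_of_mem (symmDiffGraph_mk_mem_of_notMem_coverVerts hv hx)
    (symmDiffGraph_mk_mem_of_notMem_coverVerts hv hy) (Sym2.mem_mk_left _ _)
    (Sym2.mem_mk_left _ _)

lemma exists_symmDiffGraph_adj_of_mem_sdiff [DecidableEq V] (hM' : IsMatching G M') {v : V}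
    (hv : v ∈ coverVerts M' \ coverVerts M) : ∃ x, (symmDiffGraph M M').Adj v x := by
  obtain ⟨hvM', hvM⟩ := mem_sdiff.mp hv
  obtain ⟨e, heM', hve⟩ := mem_coverVerts.mp hvM'
  obtain ⟨x, rfl⟩ := Sym2.mem_iff_exists.mp hve
  refine ⟨x, symmDiffGraph_adj.mpr ⟨Or.inr ⟨heM', fun h => hvM ?_⟩, (hM'.1 _ heM').ne⟩⟩
  exact mem_coverVerts.mpr ⟨_, h, Sym2.mem_mk_left _ _⟩

lemma symmDiffGraph_notMem_coverVerts_of_subsingleton [DecidableEq V] (hM : IsMatching G M)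
    (hM' : IsMatching G M') {v x : V} (hx : (symmDiffGraph M M').Adj v x) (hxM : s(v, x) ∈ M)
    (hv : ((symmDiffGraph M M').neighborSet v).Subsingleton) : v ∉ coverVerts M' := by
  intro hvM'
  obtain ⟨e, heM', hve⟩ := mem_coverVerts.mp hvM'
  obtain ⟨y, rfl⟩ := Sym2.mem_iff_exists.mp hve
  have hxM' : s(v, x) ∉ M' := by have := (symmDiffGraph_adj.mp hx).1; tauto
  have heM : s(v, y) ∉ M := fun h =>
    hxM' (hM.eq_of_mem_of_mem h hxM (Sym2.mem_mk_left _ _) (Sym2.mem_mk_left _ _) ▸ heM')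
  have hy : (symmDiffGraph M M').Adj v y :=
    symmDiffGraph_adj.mpr ⟨Or.inr ⟨heM', heM⟩, (hM'.1 _ heM').ne⟩
  exact hxM' (hv hy hx ▸ heM')

lemma symmDiffGraph_mem_sdiff_of_subsingleton [DecidableEq V] (hM : IsMatching G M)
    (hM' : IsMatching G M') {v x : V} (hx : (symmDiffGraph M M').Adj v x)
    (hv : ((symmDiffGraph M M').neighborSet v).Subsingleton) :
    v ∈ coverVerts M' \ coverVerts M ∨ v ∈ coverVerts M \ coverVerts M' := by
  rcases (symmDiffGraph_adj.mp hx).1 with ⟨hxM, -⟩ | ⟨hxM', -⟩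
  · exact Or.inr (mem_sdiff.mpr ⟨mem_coverVerts.mpr ⟨_, hxM, Sym2.mem_mk_left _ _⟩,
      symmDiffGraph_notMem_coverVerts_of_subsingleton hM hM' hx hxM hv⟩)
  · rw [symmDiffGraph_comm] at hx hv
    exact Or.inl (mem_sdiff.mpr ⟨mem_coverVerts.mpr ⟨_, hxM', Sym2.mem_mk_left _ _⟩,
      symmDiffGraph_notMem_coverVerts_of_subsingleton hM' hM hx hxM' hv⟩)

theorem exists_symmDiffGraph_path [Fintype V] [DecidableEq V] (hM : IsMatching G M)
    (hM' : IsMatching G M') (u : V) :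
    ∃ (w : V) (p : (symmDiffGraph M M').Walk w u), u ∈ coverVerts M' \ coverVerts M →
      p.IsPath ∧ w ≠ u ∧
      (w ∈ coverVerts M' \ coverVerts M ∨ w ∈ coverVerts M \ coverVerts M') ∧
      (∀ z ∈ p.support, z ≠ w → z ≠ u → z ∈ coverVerts M ∩ coverVerts M') ∧
      ∀ z ∈ p.support, ∀ y, (symmDiffGraph M M').Adj z y → y ∈ p.support := by
  by_cases hu : u ∈ coverVerts M' \ coverVerts M
  swap
  · exact ⟨u, .nil, fun h => absurd h hu⟩
  obtain ⟨a, hua⟩ := exists_symmDiffGraph_adj_of_mem_sdiff hM' hu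
  obtain ⟨w, p, hp, hnil, hw, hclosed⟩ :=
    exists_path_to_leaf (fun _ _ _ _ => symmDiffGraph_eq_or_eq_or_eq hM hM') hua
      (symmDiffGraph_subsingleton_neighborSet_of_notMem hM' (mem_sdiff.mp hu).2)
  refine ⟨w, p, fun _ => ⟨hp, ?_,
    symmDiffGraph_mem_sdiff_of_subsingleton hM hM' (p.adj_snd hnil) hw,
    fun z hz hzw hzu => symmDiffGraph_mem_inter_of_not_subsingleton hM hM'
      (hp.not_subsingleton_neighborSet hz hzw hzu), hclosed⟩⟩
  rintro rfl
  exact hnil (Walk.isPath_iff_nil.mp hp)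

def IsAugmentingPath (M : Finset (Sym2 V)) {u v : V} (p : G.Walk u v) : Prop :=
  u ≠ v ∧ Unmatched M u ∧ Unmatched M v ∧ p.IsPath ∧
    p.edges.IsChain (fun e f => e ∈ M ↔ f ∉ M)

lemma IsAugmentingPath.odd_length {u v : V} {p : G.Walk u v} (hp : IsAugmentingPath M p) :
    Odd p.length :=
  p.odd_length_of_isChain hp.1 hp.2.2.2.2 (fun e _ hue heM => hp.2.1 e heM hue)
    (fun e _ hve heM => hp.2.2.1 e heM hve)

theorem isAugmentingPath_mapLe [DecidableEq V] (hM : IsMatching G M) (hM' : IsMatching G M')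
    {u v : V} {p : (symmDiffGraph M M').Walk u v} (hp : p.IsPath) (huv : u ≠ v)
    (hu : u ∉ coverVerts M) (hv : v ∉ coverVerts M) :
    IsAugmentingPath M (p.mapLe (symmDiffGraph_le hM hM')) := by
  refine ⟨huv, unmatched_iff_notMem_coverVerts.mpr hu, unmatched_iff_notMem_coverVerts.mpr hv,
    (Walk.isPath_mapLe _).mpr hp, ?_⟩
  rw [Walk.edges_mapLe_eq_edges]
  exact symmDiffGraph_isChain_edges hM hM' hp

theorem mul_card_sdiff_coverVerts_le [Fintype V] [DecidableEq V] (hM : IsMatching G M)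
    (hM' : IsMatching G M') (k : ℕ)
    (hlong : ∀ u v (p : G.Walk u v), IsAugmentingPath M p → 2 * k ≤ p.length) :
    k * #(coverVerts M' \ coverVerts M) ≤
      k * #(coverVerts M \ coverVerts M') + #(coverVerts M ∩ coverVerts M') := by
  choose w P hP using exists_symmDiffGraph_path hM hM'
  refine mul_card_le_of_pairing k (T := fun u => (P u).support.toFinset)
    (fun u hu => (hP u hu).2.1) (fun u _ => List.mem_toFinset.mpr (P u).start_mem_support)
    (fun u hu hwu => (hP u hu).2.2.1.resolve_left hwu) (fun u hu hwu => ?_)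
    (fun u hu u' hu' hne hnew => (hP u hu).1.disjoint_support_of_subsingleton_neighborSet
      (hP u hu).2.2.2.2 (P u')
      (symmDiffGraph_subsingleton_neighborSet_of_notMem hM' (mem_sdiff.mp hu').2) hnew hne)
  obtain ⟨hp, hwu', -, hint, -⟩ := hP u hu
  have haug := isAugmentingPath_mapLe hM hM' hp hwu' (mem_sdiff.mp hwu).2 (mem_sdiff.mp hu).2
  have hlen := hlong _ _ _ haug
  obtain ⟨m, hm⟩ := haug.odd_length
  have := hp.length_le_card_inter_add_one hint
  rw [Walk.length_mapLe] at hlen hm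
  omega

end Matching

theorem stmt2_general {V : Type*} [Fintype V] [DecidableEq V] (G : SimpleGraph V)
    (M : Finset (Sym2 V)) (hM : IsMatching G M)
    (k : ℕ)
    (hno : ¬ ∃ (u v : V) (p : G.Walk u v), u ≠ v ∧ Unmatched M u ∧ Unmatched M v ∧
      p.IsPath ∧ List.Chain' (fun e f => (e ∈ M) ↔ (f ∉ M)) p.edges ∧
      p.length ≤ 2 * k - 1) :
    ∀ M' : Finset (Sym2 V), IsMatching G M' → k * M'.card ≤ (k + 1) * M.card := by
  intro M' hM'
  have hlong : ∀ u v (p : G.Walk u v), IsAugmentingPath M p → 2 * k ≤ p.length :=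
    fun u v p ⟨huv, hu, hv, hp, halt⟩ => by
      by_contra hlt
      exact hno ⟨u, v, p, huv, hu, hv, hp, halt, by omega⟩
  have hkey := mul_card_sdiff_coverVerts_le hM hM' k hlong
  have hM'cover := card_sdiff_add_card_inter (coverVerts M') (coverVerts M)
  have hMcover := card_sdiff_add_card_inter (coverVerts M) (coverVerts M')
  rw [hM'.card_coverVerts, inter_comm] at hM'cover
  rw [hM.card_coverVerts] at hMcover
  nlinarith

/-- If `M` is a matching in a graph `G` such that `G` admits no `M`-augmenting path of
length at most `2k−1` (a simple path between two distinct unmatched vertices whose edges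
alternate w.r.t. membership in `M`), then `k·|M*| ≤ (k+1)·|M|`, i.e.
`|M| ≥ (k/(k+1))·|M*|`, for every matching `M*` of `G`. -/
theorem stmt2 {V : Type*} [Fintype V] [DecidableEq V] (G : SimpleGraph V)
    (M : Finset (Sym2 V)) (hM : IsMatching G M)
    (k : ℕ) (hk : 1 ≤ k)
    (hno : ¬ ∃ (u v : V) (p : G.Walk u v), u ≠ v ∧ Unmatched M u ∧ Unmatched M v ∧
      p.IsPath ∧ List.Chain' (fun e f => (e ∈ M) ↔ (f ∉ M)) p.edges ∧
      p.length ≤ 2 * k - 1) :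
    ∀ M' : Finset (Sym2 V), IsMatching G M' → k * M'.card ≤ (k + 1) * M.card :=
  stmt2_general G M hM k hno
end

section
/- If M is a maximal matching in G such that no edge of M has both endpoints adjacent to unmatched vertices, then M has no augmenting path of length 3, and hence |M| ≥ (2/3)|M*| for any matching M* of G. -/
/-!
Every edge of a matching `M*` meets the set `S` of `M`-matched vertices (maximality of `M`), and
meets it in both endpoints unless it touches an unmatched vertex. Since the edges of `M*` are
disjoint, `∑_{e' ∈ M*} |e' ∩ S| ≤ |S| ≤ 2|M|`. Sending an edge of `M*` that touches an unmatched
vertex to the `M`-edge at its matched endpoint is injective: two such edges at the two ends of one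
`M`-edge are exactly the forbidden configuration. Hence
`2|M*| ≤ ∑_{e' ∈ M*} |e' ∩ S| + #{e' ∈ M* | e' touches an unmatched vertex} ≤ 2|M| + |M|`.
-/

section

open Finset

variable {V : Type*}

def matchedVertices [DecidableEq V] (M : Finset (Sym2 V)) : Finset V :=
  M.biUnion Sym2.toFinset

def TouchesUnmatched (M : Finset (Sym2 V)) (e : Sym2 V) : Prop :=
  ∃ u ∈ e, Unmatched M u

theorem mem_matchedVertices [DecidableEq V] {M : Finset (Sym2 V)} {x : V} :
    x ∈ matchedVertices M ↔ ¬ Unmatched M x := by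
  simp [matchedVertices, Unmatched]

theorem card_matchedVertices_le [DecidableEq V] (M : Finset (Sym2 V)) :
    #(matchedVertices M) ≤ 2 * #M := calc
  #(matchedVertices M) ≤ ∑ e ∈ M, #e.toFinset := card_biUnion_le
  _ ≤ ∑ _e ∈ M, 2 := sum_le_sum fun e _ => by rw [Sym2.card_toFinset]; split <;> omega
  _ = 2 * #M := by rw [sum_const, smul_eq_mul, mul_comm]

namespace IsMatching

variable {G : SimpleGraph V} {M : Finset (Sym2 V)}

theorem eq_of_mem_of_mem_s6 (hM : IsMatching G M) {e f : Sym2 V} (he : e ∈ M) (hf : f ∈ M) {x : V}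
    (hxe : x ∈ e) (hxf : x ∈ f) : e = f := by
  by_contra hef
  exact hM.2 e he f hf hef x hxe hxf

theorem adj_of_mem (hM : IsMatching G M) {e : Sym2 V} (he : e ∈ M) {x y : V} (hx : x ∈ e)
    (hy : y ∈ e) (hxy : x ≠ y) : G.Adj x y := by
  rw [← G.mem_edgeSet, ← (Sym2.mem_and_mem_iff hxy).mp ⟨hx, hy⟩]
  exact hM.1 e he

theorem sum_card_toFinset_inter_le [DecidableEq V] (hM : IsMatching G M) (T : Finset V) :
    ∑ e ∈ M, #(e.toFinset ∩ T) ≤ #T := by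
  rw [← card_biUnion]
  · exact card_le_card (biUnion_subset.mpr fun _ _ => inter_subset_right)
  · intro e he f hf hef
    refine disjoint_left.mpr fun x hxe hxf => ?_
    simp only [mem_inter, Sym2.mem_toFinset] at hxe hxf
    exact hM.2 e he f hf hef x hxe.1 hxf.1

end IsMatching

section MaximalMatching

variable {G : SimpleGraph V} {M : Finset (Sym2 V)}
  (hmax : ∀ e ∈ G.edgeSet, ∃ x : V, x ∈ e ∧ ¬ Unmatched M x)
include hmax

theorem two_le_card_toFinset_inter_matchedVertices_add [DecidableEq V]
    [DecidablePred (TouchesUnmatched M)] {e : Sym2 V} (he : e ∈ G.edgeSet) :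
    2 ≤ #(e.toFinset ∩ matchedVertices M) + if TouchesUnmatched M e then 1 else 0 := by
  split_ifs with hB
  · obtain ⟨x, hxe, hx⟩ := hmax e he
    have : 0 < #(e.toFinset ∩ matchedVertices M) :=
      card_pos.mpr ⟨x, mem_inter.mpr ⟨Sym2.mem_toFinset.mpr hxe, mem_matchedVertices.mpr hx⟩⟩
    omega
  · have hsub : e.toFinset ⊆ matchedVertices M := fun x hx =>
      mem_matchedVertices.mpr fun hu => hB ⟨x, Sym2.mem_toFinset.mp hx, hu⟩
    rw [inter_eq_left.mpr hsub, Sym2.card_toFinset_of_not_isDiag e (G.not_isDiag_of_mem_edgeSet he)]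

theorem card_filter_touchesUnmatched_le [DecidablePred (TouchesUnmatched M)]
    {M' : Finset (Sym2 V)} (hM' : IsMatching G M')
    (hno : ¬ ∃ w w' u z : V, s(w, w') ∈ M ∧ Unmatched M u ∧ Unmatched M z ∧ u ≠ z ∧
        G.Adj u w ∧ G.Adj w' z) :
    #(M'.filter (TouchesUnmatched M)) ≤ #M := by
  refine card_le_card_of_forall_subsingleton (fun e f => ∃ x, x ∈ e ∧ x ∈ f) ?_ ?_
  · intro e he
    obtain ⟨x, hxe, hx⟩ := hmax e (hM'.1 e (mem_filter.mp he).1)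
    simp only [Unmatched, not_forall, not_not] at hx
    obtain ⟨f, hf, hxf⟩ := hx
    exact ⟨f, hf, x, hxe, hxf⟩
  · rintro f hf e₁ ⟨he₁, x₁, hx₁e, hx₁f⟩ e₂ ⟨he₂, x₂, hx₂e, hx₂f⟩
    obtain ⟨he₁, u₁, hu₁e, hu₁⟩ := mem_filter.mp he₁
    obtain ⟨he₂, u₂, hu₂e, hu₂⟩ := mem_filter.mp he₂
    by_contra hne
    have hx : x₁ ≠ x₂ := fun h => hne (hM'.eq_of_mem_of_mem_s6 he₁ he₂ hx₁e (h ▸ hx₂e))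
    have hu : u₁ ≠ u₂ := fun h => hne (hM'.eq_of_mem_of_mem_s6 he₁ he₂ hu₁e (h ▸ hu₂e))
    have hxu₁ : x₁ ≠ u₁ := fun h => hu₁ f hf (h ▸ hx₁f)
    have hxu₂ : x₂ ≠ u₂ := fun h => hu₂ f hf (h ▸ hx₂f)
    have hf : s(x₁, x₂) ∈ M := (Sym2.mem_and_mem_iff hx).mp ⟨hx₁f, hx₂f⟩ ▸ hf
    exact hno ⟨x₁, x₂, u₁, u₂, hf, hu₁, hu₂, hu,
      (hM'.adj_of_mem he₁ hx₁e hu₁e hxu₁).symm, hM'.adj_of_mem he₂ hx₂e hu₂e hxu₂⟩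

end MaximalMatching

theorem not_exists_augmenting_path_length_three {G : SimpleGraph V} {M : Finset (Sym2 V)}
    (hno : ¬ ∃ w w' u z : V, s(w, w') ∈ M ∧ Unmatched M u ∧ Unmatched M z ∧ u ≠ z ∧
        G.Adj u w ∧ G.Adj w' z) :
    ¬ ∃ (u v : V) (p : G.Walk u v), u ≠ v ∧ Unmatched M u ∧ Unmatched M v ∧
        p.IsPath ∧ List.IsChain (fun e f => (e ∈ M) ↔ (f ∉ M)) p.edges ∧ p.length = 3 := by
  rintro ⟨u, v, p, hne, hu, hv, -, hchain, hlen⟩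
  match p, hlen with
  | .cons (v := a) hua (.cons (v := b) _ (.cons hbv .nil)), _ =>
    have hab : s(a, b) ∈ M := not_not.mp fun h =>
      hu _ ((List.rel_of_isChain_cons_cons hchain).mpr h) (Sym2.mem_mk_left u a)
    exact hno ⟨a, b, u, v, hab, hu, hv, hne, hua, hbv⟩

end

theorem stmt6_general {V : Type*} (G : SimpleGraph V)
    (M : Finset (Sym2 V))
    (hmax : ∀ e ∈ G.edgeSet, ∃ x : V, x ∈ e ∧ ¬ Unmatched M x)
    (hno : ¬ ∃ w w' u z : V, s(w, w') ∈ M ∧ Unmatched M u ∧ Unmatched M z ∧ u ≠ z ∧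
        G.Adj u w ∧ G.Adj w' z) :
    (¬ ∃ (u v : V) (p : G.Walk u v), u ≠ v ∧ Unmatched M u ∧ Unmatched M v ∧
        p.IsPath ∧ List.Chain' (fun e f => (e ∈ M) ↔ (f ∉ M)) p.edges ∧ p.length = 3)
    ∧ (∀ M' : Finset (Sym2 V), IsMatching G M' → 2 * M'.card ≤ 3 * M.card) := by
  classical
  refine ⟨not_exists_augmenting_path_length_three hno, fun M' hM' => ?_⟩
  open Finset in
  calc 2 * #M' = ∑ _e ∈ M', 2 := by rw [sum_const, smul_eq_mul, mul_comm]
    _ ≤ ∑ e ∈ M', (#(e.toFinset ∩ matchedVertices M) + if TouchesUnmatched M e then 1 else 0) :=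
      sum_le_sum fun e he => two_le_card_toFinset_inter_matchedVertices_add hmax (hM'.1 e he)
    _ = ∑ e ∈ M', #(e.toFinset ∩ matchedVertices M) + #(M'.filter (TouchesUnmatched M)) := by
      rw [sum_add_distrib, card_filter]
    _ ≤ #(matchedVertices M) + #M :=
      add_le_add (hM'.sum_card_toFinset_inter_le _) (card_filter_touchesUnmatched_le hmax hM' hno)
    _ ≤ 3 * #M := by linarith [card_matchedVertices_le M]

/-- If `M` is a maximal matching in `G` such that no edge of `M` has both endpoints
adjacent to (distinct) unmatched vertices, then `M` has no augmenting path of length 3,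
and hence `|M| ≥ (2/3)|M*|`, i.e. `2|M*| ≤ 3|M|`, for any matching `M*` of `G`. -/
theorem stmt6 {V : Type*} [Fintype V] [DecidableEq V] (G : SimpleGraph V)
    (M : Finset (Sym2 V)) (hM : IsMatching G M)
    (hmax : ∀ e ∈ G.edgeSet, ∃ x : V, x ∈ e ∧ ¬ Unmatched M x)
    (hno : ¬ ∃ w w' u z : V, s(w, w') ∈ M ∧ Unmatched M u ∧ Unmatched M z ∧ u ≠ z ∧
        G.Adj u w ∧ G.Adj w' z) :
    (¬ ∃ (u v : V) (p : G.Walk u v), u ≠ v ∧ Unmatched M u ∧ Unmatched M v ∧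
        p.IsPath ∧ List.Chain' (fun e f => (e ∈ M) ↔ (f ∉ M)) p.edges ∧ p.length = 3)
    ∧ (∀ M' : Finset (Sym2 V), IsMatching G M' → 2 * M'.card ≤ 3 * M.card) :=
  stmt6_general G M hmax hno
end

section
/- Splicing Euler tours is valid: if E_x is an Euler tour of tree T_x containing vertex x, and E_y an Euler tour of tree T_y rooted at y, with T_x and T_y vertex-disjoint, then inserting the sequence (x, E_y, x) immediately after the first occurrence of x in E_x yields an Euler tour of the tree T obtained from T_x and T_y by adding the edge (x, y). -/
/-!
Record a vertex sequence by its list of consecutive steps `(E i, E (i+1))`; `E` is an Euler tour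
of `T` iff that list enumerates the darts of `T` without repetition. Splicing the closed detour
`x, Ey, x` into `Ex` at an occurrence of `x` turns the step list into a permutation of the steps
of `Ex`, the steps of `Ey`, and the two darts `(x, y)`, `(y, x)` of the new edge. Vertex
disjointness makes these three dart lists disjoint, so their concatenation lists every dart of
`Tx ⊔ Ty ⊔ {xy}` exactly once.
-/

/-- `E` is an Euler tour of the graph (tree) `T` rooted at `r`, recorded as a sequence
of vertex occurrences: it starts and ends at `r`, and for every ordered pair of
vertices, the corresponding directed traversal occurs exactly once among consecutive
pairs of `E` if the pair is an edge of `T`, and never otherwise (so every edge is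
traversed exactly twice, once in each direction). -/
def IsEulerTour {V : Type*} [DecidableEq V] (T : SimpleGraph V) (r : V)
    (E : List V) : Prop :=
  E.head? = some r ∧ E.getLast? = some r ∧
  (∀ u v : V, T.Adj u v → (E.zip E.tail).count (u, v) = 1) ∧
  (∀ u v : V, ¬ T.Adj u v → (E.zip E.tail).count (u, v) = 0)

section Steps

variable {α : Type*}

def steps (l : List α) : List (α × α) := l.zip l.tail

@[simp] lemma steps_singleton (a : α) : steps [a] = [] := rfl

@[simp] lemma steps_cons_cons (a b : α) (l : List α) :
    steps (a :: b :: l) = (a, b) :: steps (b :: l) := rfl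

lemma mem_of_mem_steps {l : List α} {a b : α} (h : (a, b) ∈ steps l) : a ∈ l ∧ b ∈ l :=
  have ⟨ha, hb⟩ := List.of_mem_zip h
  ⟨ha, List.mem_of_mem_tail hb⟩

lemma steps_append_cons (l m : List α) (a : α) :
    steps (l ++ a :: m) = steps (l ++ [a]) ++ steps (a :: m) := by
  induction l with
  | nil => rfl
  | cons b l ih =>
    cases l with
    | nil => rfl
    | cons c l => simpa using ih

lemma steps_append_singleton {l : List α} {b : α} (hl : l.getLast? = some b) (a : α) :
    steps (l ++ [a]) = steps l ++ [(b, a)] := by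
  obtain ⟨l, rfl⟩ := List.getLast?_eq_some_iff.1 hl
  simpa using steps_append_cons l [a] b

lemma steps_detour_perm (A B W : List α) {x y : α} (hh : W.head? = some y)
    (hl : W.getLast? = some y) :
    (steps (A ++ [x] ++ W ++ [x] ++ B)).Perm
      (steps (A ++ x :: B) ++ steps W ++ [(x, y), (y, x)]) := by
  obtain ⟨W, rfl⟩ := List.head?_eq_some_iff.1 hh
  have hsplit : A ++ [x] ++ (y :: W) ++ [x] ++ B = A ++ x :: y :: (W ++ x :: B) := by simp
  rw [hsplit, steps_append_cons A, steps_append_cons A B, steps_cons_cons, ← List.cons_append,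
    steps_append_cons (y :: W), steps_append_singleton hl]
  classical
  simp only [List.append_assoc, List.cons_append, List.nil_append]
  refine (List.perm_append_left_iff _).2 (List.perm_iff_count.2 fun p => ?_)
  simp only [List.count_append, List.count_cons, List.count_nil]
  omega

lemma steps_disjoint_of_disjoint {L M : List α} (h : ∀ v ∈ L, v ∉ M) :
    (steps L).Disjoint (steps M) :=
  fun ⟨u, _⟩ hL hM => h u (mem_of_mem_steps hL).1 (mem_of_mem_steps hM).1

lemma mem_iff_of_mem_steps_append {L M : List α} (h : ∀ v ∈ L, v ∉ M) {u v : α}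
    (huv : (u, v) ∈ steps L ++ steps M) : u ∈ L ↔ v ∈ L := by
  rcases List.mem_append.1 huv with hL | hM
  · exact iff_of_true (mem_of_mem_steps hL).1 (mem_of_mem_steps hL).2
  · exact iff_of_false (fun hu => h u hu (mem_of_mem_steps hM).1)
      (fun hv => h v hv (mem_of_mem_steps hM).2)

lemma takeWhile_append_cons_tail_dropWhile [DecidableEq α] {l : List α} {x : α} (h : x ∈ l) :
    l.takeWhile (· != x) ++ x :: (l.dropWhile (· != x)).tail = l := by
  induction l with
  | nil => simp at h
  | cons a l ih =>
    by_cases hax : a = x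
    · simp [hax]
    · simp [hax, ih (List.mem_of_ne_of_mem (Ne.symm hax) h)]

end Steps

section Darts

variable {V : Type*}

def IsDartList (G : SimpleGraph V) (S : List (V × V)) : Prop :=
  S.Nodup ∧ ∀ u v, (u, v) ∈ S ↔ G.Adj u v

lemma IsDartList.perm {G : SimpleGraph V} {S S' : List (V × V)} (h : IsDartList G S)
    (hS : S.Perm S') : IsDartList G S' :=
  ⟨hS.nodup_iff.1 h.1, fun u v => hS.mem_iff.symm.trans (h.2 u v)⟩

lemma IsDartList.sup {G H : SimpleGraph V} {S T : List (V × V)} (hG : IsDartList G S)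
    (hH : IsDartList H T) (hST : S.Disjoint T) : IsDartList (G ⊔ H) (S ++ T) :=
  ⟨List.nodup_append'.2 ⟨hG.1, hH.1, hST⟩, by simp [hG.2, hH.2]⟩

lemma isDartList_fromEdgeSet_singleton {x y : V} (hxy : x ≠ y) :
    IsDartList (SimpleGraph.fromEdgeSet {s(x, y)}) [(x, y), (y, x)] := by
  refine ⟨by simp [hxy, hxy.symm], fun u v => ?_⟩
  simp only [List.mem_cons, Prod.mk.injEq, List.not_mem_nil, or_false,
    SimpleGraph.fromEdgeSet_adj, Set.mem_singleton_iff, Sym2.eq_iff]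
  constructor
  · rintro (⟨rfl, rfl⟩ | ⟨rfl, rfl⟩) <;> simp [hxy, hxy.symm]
  · exact And.left

lemma isEulerTour_iff [DecidableEq V] {T : SimpleGraph V} {r : V} {E : List V} :
    IsEulerTour T r E ↔ E.head? = some r ∧ E.getLast? = some r ∧ IsDartList T (steps E) := by
  refine and_congr_right fun _ => and_congr_right fun _ =>
    ⟨fun ⟨h1, h0⟩ => ?_, fun ⟨hnd, hmem⟩ => ?_⟩
  · refine ⟨List.nodup_iff_count_le_one.2 fun ⟨u, v⟩ => ?_, fun u v => ?_⟩
    · by_cases huv : T.Adj u v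
      · exact (h1 u v huv).le
      · exact (h0 u v huv).le.trans zero_le_one
    · rw [← List.count_pos_iff]
      by_cases huv : T.Adj u v
      · simp [steps, h1 u v huv, huv]
      · simp [steps, h0 u v huv, huv]
  · exact ⟨fun u v huv => List.count_eq_one_of_mem hnd ((hmem u v).2 huv),
      fun u v huv => List.count_eq_zero_of_not_mem (mt (hmem u v).1 huv)⟩

end Darts

/-- Splicing Euler tours is valid: if `Ex` is an Euler tour of the tree `Tx` (rooted at
`r`) containing the vertex `x`, and `Ey` an Euler tour of the tree `Ty` rooted at `y`,
with `Tx` and `Ty` vertex-disjoint, then inserting the block `(x, Ey, x)` immediately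
after the first occurrence of `x` in `Ex` yields an Euler tour of the tree `T` obtained
from `Tx` and `Ty` by adding the edge `(x, y)`. -/
theorem stmt11 {V : Type*} [DecidableEq V] (Tx Ty : SimpleGraph V) (r x y : V)
    (Ex Ey : List V)
    (hx : IsEulerTour Tx r Ex) (hy : IsEulerTour Ty y Ey)
    (hxm : x ∈ Ex) (hdisj : ∀ v ∈ Ex, v ∉ Ey) :
    IsEulerTour (Tx ⊔ Ty ⊔ SimpleGraph.fromEdgeSet {s(x, y)}) r
      (Ex.takeWhile (· != x) ++ [x] ++ Ey ++ [x] ++ (Ex.dropWhile (· != x)).tail) := by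
  rw [isEulerTour_iff] at hx hy ⊢
  obtain ⟨hxh, hxl, hxd⟩ := hx
  obtain ⟨hyh, hyl, hyd⟩ := hy
  set A := Ex.takeWhile (· != x)
  set B := (Ex.dropWhile (· != x)).tail
  have hEx : A ++ x :: B = Ex := takeWhile_append_cons_tail_dropWhile hxm
  have hyEy : y ∈ Ey := List.mem_of_mem_head? hyh
  have hxy : x ≠ y := fun h => hdisj x hxm (h ▸ hyEy)
  refine ⟨?_, ?_, ?_⟩
  · rw [← hEx] at hxh
    simpa [List.head?_append] using hxh
  · have hlast (L : List V) : (L ++ x :: B).getLast? = (x :: B).getLast? :=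
      List.getLast?_append_of_ne_nil _ (List.cons_ne_nil _ _)
    rw [← hEx, hlast] at hxl
    rwa [show A ++ [x] ++ Ey ++ [x] ++ B = A ++ [x] ++ Ey ++ x :: B by simp, hlast]
  · refine (IsDartList.sup (hxd.sup hyd ?_) (isDartList_fromEdgeSet_singleton hxy) ?_).perm
      (hEx ▸ steps_detour_perm A B Ey hyh hyl).symm
    · exact steps_disjoint_of_disjoint hdisj
    · have hyEx : y ∉ Ex := fun h => hdisj y h hyEy
      rintro _ huv hedge
      simp only [List.mem_cons, List.not_mem_nil, or_false] at hedge
      rcases hedge with rfl | rfl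
      · exact hyEx ((mem_iff_of_mem_steps_append hdisj huv).1 hxm)
      · exact hyEx ((mem_iff_of_mem_steps_append hdisj huv).2 hxm)
end

section
/- Splitting an Euler tour is valid: let E be an Euler tour of a tree T rooted at r, and let (x,y) be a tree edge with x an ancestor of y. Then the contiguous subsequence of E from the first occurrence f(y) to the last occurrence l(y) of y is an Euler tour of the subtree of T rooted at y, and deleting this subsequence together with the two adjacent occurrences of x (at positions f(y)−1 and l(y)+1) from E yields an Euler tour of T with the subtree of y removed. -/
/-- Rooted trees with vertices labelled by `V`. -/
inductive RTree (V : Type*) where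
  | node : V → List (RTree V) → RTree V

namespace RTree

variable {V : Type*}

/-- The root label of a rooted tree. -/
def root : RTree V → V
  | node v _ => v

/-- The list of all vertex labels of a rooted tree. -/
def verts : RTree V → List V
  | node v cs => v :: cs.attach.flatMap (fun c => verts c.1)
  decreasing_by
    have := List.sizeOf_lt_of_mem c.2
    simp only [RTree.node.sizeOf_spec]
    omega

/-- The Euler tour of a rooted tree, recorded as the sequence of vertex occurrences in
which each traversal of an edge records both of its endpoints: entering a node records
it, and each traversal of an edge `(w, c)` records `w` when leaving `w` and records `w`
again when returning to it (the subtree of each child is enclosed between two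
occurrences of the parent). -/
def etour : RTree V → List V
  | node v cs => [v] ++ cs.attach.flatMap (fun c => [v] ++ etour c.1 ++ [v]) ++ [v]
  decreasing_by
    have := List.sizeOf_lt_of_mem c.2
    simp only [RTree.node.sizeOf_spec]
    omega

/-- Remove from `t` every child subtree whose root is `y`. -/
def remove [DecidableEq V] : RTree V → V → RTree V
  | node w cs, y =>
      node w (cs.attach.filterMap
        (fun c => if c.1.root = y then none else some (remove c.1 y)))
  decreasing_by
    have := List.sizeOf_lt_of_mem c.2
    simp only [RTree.node.sizeOf_spec]
    omega

/-- `ChildOf t x s`: somewhere in `t` there is a node labelled `x` having `s` as one of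
its child subtrees; i.e. `(x, root s)` is a tree edge with `x` the parent of `root s`,
and `s` is the subtree rooted at `root s`. -/
inductive ChildOf : RTree V → V → RTree V → Prop
  | base {w : V} {cs : List (RTree V)} {s : RTree V} :
      s ∈ cs → ChildOf (node w cs) w s
  | step {w : V} {cs : List (RTree V)} {c : RTree V} {x : V} {s : RTree V} :
      c ∈ cs → ChildOf c x s → ChildOf (node w cs) x s

end RTree

/-!
The tour of `node w [c₁, …, cₖ]` is `w`, then `w :: tour cᵢ ++ [w]` for each child, then `w`.
Inducting along the path from the root down to the edge `(x, y)` therefore writes the tour as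
`A ++ x :: tour s ++ x :: B`, and removing `s` leaves the tours of all other subtrees in place,
so the tour of `t.remove y` is `A ++ B`. Distinct labels keep `y` out of `A` and `B` (and `x ≠ y`),
and `tour s` begins and ends with `y`, so its ends are the first and last occurrences of `y`.
-/

theorem List.idxOf_append_cons_of_notMem {α : Type*} [DecidableEq α] {a : α} {l₁ : List α}
    (h : a ∉ l₁) (l₂ : List α) : (l₁ ++ a :: l₂).idxOf a = l₁.length := by
  simp [List.idxOf_append_of_notMem h]

theorem List.length_sub_one_sub_idxOf_reverse_append_cons {α : Type*} [DecidableEq α] {a : α}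
    {l₂ : List α} (h : a ∉ l₂) (l₁ : List α) :
    (l₁ ++ a :: l₂).length - 1 - (l₁ ++ a :: l₂).reverse.idxOf a = l₁.length := by
  have h' : a ∉ l₂.reverse := List.mem_reverse.not.2 h
  rw [List.reverse_append, List.reverse_cons, List.append_assoc, List.singleton_append,
    List.idxOf_append_cons_of_notMem h']
  simp

theorem List.split_around_first_last_idxOf {α : Type*} [DecidableEq α] {a x : α}
    {A B M E : List α} (hE : E = A ++ x :: a :: (M ++ [a]) ++ x :: B) (hA : a ∉ A) (hB : a ∉ B)
    (hx : x ≠ a) :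
    let f := E.idxOf a
    let l := E.length - 1 - E.reverse.idxOf a
    ((E.drop f).take (l - f + 1) = a :: (M ++ [a])) ∧
    (E[f - 1]? = some x) ∧ (E[l + 1]? = some x) ∧
    (E.take (f - 1) ++ E.drop (l + 2) = A ++ B) := by
  intro f l
  have hf : f = A.length + 1 := by
    rw [show f = E.idxOf a from rfl, show E = (A ++ [x]) ++ a :: (M ++ [a] ++ x :: B) by simp [hE],
      List.idxOf_append_cons_of_notMem (by simp [hA, hx.symm])]
    simp
  have hl : l = A.length + (M.length + 2) := by
    rw [show l = E.length - 1 - E.reverse.idxOf a from rfl,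
      show E = (A ++ x :: a :: M) ++ a :: x :: B by simp [hE],
      List.length_sub_one_sub_idxOf_reverse_append_cons (by simp [hB, hx.symm])]
    simp
  refine ⟨?_, ?_, ?_, ?_⟩
  · rw [hf, hl, show A.length + (M.length + 2) - (A.length + 1) + 1 = M.length + 2 by omega,
      show E = (A ++ [x]) ++ (a :: (M ++ [a]) ++ x :: B) by simp [hE], List.drop_left' (by simp),
      List.take_left' (by simp)]
  · simp [hf, hE]
  · rw [hl, show E = (A ++ x :: a :: (M ++ [a])) ++ x :: B by simp [hE],
      List.getElem?_append_right (by simp; omega)]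
    simp
  · have hA' : E.take A.length = A := by simp [hE]
    have hB' : E.drop (A.length + (M.length + 2) + 2) = B := by
      rw [show E = (A ++ x :: a :: (M ++ [a]) ++ [x]) ++ B by simp [hE],
        List.drop_left' (by simp; omega)]
    rw [hf, hl, Nat.add_sub_cancel, hA', hB']

namespace RTree

variable {V : Type*}

@[elab_as_elim]
theorem induction {P : RTree V → Prop}
    (node : ∀ v cs, (∀ c ∈ cs, P c) → P (node v cs)) : ∀ t, P t
  | .node v cs => node v cs fun c _ => induction node c
  decreasing_by
    have := List.sizeOf_lt_of_mem ‹c ∈ cs›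
    simp only [RTree.node.sizeOf_spec]
    omega

theorem verts_node (v : V) (cs : List (RTree V)) :
    (node v cs).verts = v :: cs.flatMap verts := by
  rw [verts]
  conv_rhs => rw [← List.attach_map_subtype_val cs, List.flatMap_map]

theorem etour_node (v : V) (cs : List (RTree V)) :
    (node v cs).etour = [v] ++ cs.flatMap (fun c => [v] ++ c.etour ++ [v]) ++ [v] := by
  rw [etour]
  conv_rhs => rw [← List.attach_map_subtype_val cs, List.flatMap_map]

theorem remove_node [DecidableEq V] (w y : V) (cs : List (RTree V)) :
    (node w cs).remove y =
      node w (cs.filterMap fun c => if c.root = y then none else some (c.remove y)) := by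
  rw [remove]
  conv_rhs => rw [← List.attach_map_subtype_val cs, List.filterMap_map]
  rfl

theorem root_mem_verts (t : RTree V) : t.root ∈ t.verts := by
  cases t with
  | node v cs => simp [verts_node, root]

theorem mem_verts_of_mem_etour {a : V} (t : RTree V) : a ∈ t.etour → a ∈ t.verts := by
  induction t using RTree.induction with
  | node v cs ih =>
    simp only [etour_node, verts_node, List.mem_append, List.mem_flatMap, List.mem_singleton]
    rintro ((rfl | ⟨c, hc, (rfl | ha) | rfl⟩) | rfl)
    all_goals first
      | exact List.mem_cons_self
      | exact List.mem_cons_of_mem _ (List.mem_flatMap.2 ⟨c, hc, ih c hc ha⟩)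

theorem remove_eq_self [DecidableEq V] {y : V} (t : RTree V) (hy : y ∉ t.verts) :
    t.remove y = t := by
  induction t using RTree.induction with
  | node w cs ih =>
    rw [remove_node]
    conv_rhs => rw [← List.filterMap_some (l := cs)]
    simp only [verts_node, List.mem_cons, List.mem_flatMap, not_or, not_exists, not_and] at hy
    refine congrArg _ (List.filterMap_congr fun c hc => ?_)
    rw [if_neg fun h : c.root = y => hy.2 c hc (h ▸ root_mem_verts c), ih c hc (hy.2 c hc)]

theorem notMem_flatMap_etour {w y : V} {cs : List (RTree V)} (hw : w ≠ y)
    (hy : y ∉ cs.flatMap verts) : y ∉ cs.flatMap fun c => [w] ++ c.etour ++ [w] := by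
  simp only [List.mem_flatMap, List.mem_append, List.mem_singleton, not_exists, not_and] at hy ⊢
  rintro c hc ((rfl | h) | rfl)
  exacts [hw rfl, hy c hc (mem_verts_of_mem_etour c h), hw rfl]

theorem filterMap_remove_of_notMem [DecidableEq V] {y : V} {cs : List (RTree V)}
    (hy : y ∉ cs.flatMap verts) :
    (cs.filterMap fun c => if c.root = y then none else some (c.remove y)) = cs := by
  have h : ∀ c ∈ cs, y ∉ c.verts := fun c hc h => hy (List.mem_flatMap.2 ⟨c, hc, h⟩)
  conv_rhs => rw [← List.filterMap_some (l := cs)]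
  refine List.filterMap_congr fun c hc => ?_
  rw [if_neg fun h' : c.root = y => h c hc (h' ▸ root_mem_verts c), remove_eq_self c (h c hc)]

theorem notMem_siblings_of_nodup {w y : V} {cs₁ cs₂ : List (RTree V)} {c : RTree V}
    (hnd : (node w (cs₁ ++ c :: cs₂)).verts.Nodup) (hy : y ∈ c.verts) :
    w ≠ y ∧ y ∉ cs₁.flatMap verts ∧ y ∉ cs₂.flatMap verts ∧ c.verts.Nodup := by
  simp only [verts_node, List.flatMap_append, List.flatMap_cons, List.nodup_cons,
    List.nodup_append, List.mem_append] at hnd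
  obtain ⟨hw, -, ⟨hc, -, h₂⟩, h₁⟩ := hnd
  exact ⟨fun h => hw (.inr (.inl (h ▸ hy))), fun h => h₁ y h y (.inl hy) rfl,
    fun h => h₂ y hy y h rfl, hc⟩

theorem ChildOf.verts_subset_tail {t s : RTree V} {x : V} (hc : ChildOf t x s) :
    s.verts ⊆ t.verts.tail := by
  induction hc with
  | base hmem => rw [verts_node]; exact fun a ha => List.mem_flatMap.2 ⟨_, hmem, ha⟩
  | step hmem _ ih =>
    rw [verts_node]; exact fun a ha => List.mem_flatMap.2 ⟨_, hmem, List.mem_of_mem_tail (ih ha)⟩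

theorem ChildOf.root_ne {t s : RTree V} {x : V} (hc : ChildOf t x s) (hnd : t.verts.Nodup) :
    t.root ≠ s.root := by
  cases t with
  | node u ds =>
    rw [verts_node, List.nodup_cons] at hnd
    intro h
    have hs := hc.verts_subset_tail (root_mem_verts s)
    rw [verts_node, List.tail_cons, ← h] at hs
    exact hnd.1 hs

theorem ChildOf.exists_etour_split [DecidableEq V] {t s : RTree V} {x : V} (hc : ChildOf t x s)
    (hnd : t.verts.Nodup) :
    x ≠ s.root ∧ ∃ A B : List V, t.etour = A ++ x :: s.etour ++ x :: B ∧
      s.root ∉ A ∧ s.root ∉ B ∧ (t.remove s.root).etour = A ++ B := by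
  induction hc with
  | @base w cs s hmem =>
    obtain ⟨cs₁, cs₂, rfl⟩ := List.append_of_mem hmem
    obtain ⟨hw, h₁, h₂, -⟩ := notMem_siblings_of_nodup hnd (root_mem_verts s)
    refine ⟨hw, w :: cs₁.flatMap (fun c => [w] ++ c.etour ++ [w]),
      cs₂.flatMap (fun c => [w] ++ c.etour ++ [w]) ++ [w], ?_, ?_, ?_, ?_⟩
    · simp [etour_node]
    · simpa [hw.symm] using notMem_flatMap_etour hw h₁
    · simpa [hw.symm] using notMem_flatMap_etour hw h₂
    · rw [remove_node, List.filterMap_append, List.filterMap_cons, if_pos rfl,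
        filterMap_remove_of_notMem h₁, filterMap_remove_of_notMem h₂, etour_node]
      simp
  | @step w cs c x s hmem hcs ih =>
    obtain ⟨cs₁, cs₂, rfl⟩ := List.append_of_mem hmem
    obtain ⟨hw, h₁, h₂, hc⟩ :=
      notMem_siblings_of_nodup hnd (List.mem_of_mem_tail (hcs.verts_subset_tail (root_mem_verts s)))
    obtain ⟨hxs, A, B, hE, hA, hB, hR⟩ := ih hc
    refine ⟨hxs, w :: cs₁.flatMap (fun c => [w] ++ c.etour ++ [w]) ++ [w] ++ A,
      B ++ [w] ++ cs₂.flatMap (fun c => [w] ++ c.etour ++ [w]) ++ [w], ?_, ?_, ?_, ?_⟩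
    · simp [etour_node, hE]
    · simpa [hw.symm, hA] using notMem_flatMap_etour hw h₁
    · simpa [hw.symm, hB] using notMem_flatMap_etour hw h₂
    · rw [remove_node, List.filterMap_append, List.filterMap_cons, if_neg (hcs.root_ne hc),
        filterMap_remove_of_notMem h₁, filterMap_remove_of_notMem h₂, etour_node]
      simp [hR]

theorem exists_etour_eq_root_cons (t : RTree V) :
    ∃ M, t.etour = t.root :: (M ++ [t.root]) := by
  cases t with
  | node v cs => exact ⟨cs.flatMap fun c => [v] ++ c.etour ++ [v], by simp [etour_node, root]⟩

end RTree

/-- Splitting an Euler tour is valid: let `E` be the Euler tour of a rooted tree `t`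
with distinct vertex labels, and let `(x,y)` be a tree edge with `x` an ancestor
(the parent) of `y`, with `s` the subtree of `t` rooted at `y`.  Then the contiguous
subsequence of `E` from the first occurrence `f(y)` to the last occurrence `l(y)` of `y`
is the Euler tour of the subtree rooted at `y`, the positions `f(y)−1` and `l(y)+1` hold
occurrences of `x`, and deleting this subsequence together with those two adjacent
occurrences of `x` from `E` yields the Euler tour of `t` with the subtree of `y`
removed. -/
theorem stmt12 {V : Type*} [DecidableEq V] (t s : RTree V) (x y : V)
    (hnd : t.verts.Nodup) (hc : RTree.ChildOf t x s) (hy : s.root = y) :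
    let E := t.etour
    let f := E.idxOf y
    let l := E.length - 1 - E.reverse.idxOf y
    ((E.drop f).take (l - f + 1) = s.etour) ∧
    (E[f - 1]? = some x) ∧ (E[l + 1]? = some x) ∧
    (E.take (f - 1) ++ E.drop (l + 2) = (t.remove y).etour) := by
  subst hy
  obtain ⟨hxs, A, B, hE, hA, hB, hR⟩ := hc.exists_etour_split hnd
  obtain ⟨M, hM⟩ := s.exists_etour_eq_root_cons
  rw [hR, hM]
  exact List.split_around_first_last_idxOf (hM ▸ hE) hA hB hxs
end

section
/- Let G be a graph with a maximal matching M maintained under the invariant that every heavy vertex (degree ≥ 2√m) is matched. If an edge (x,y) ∈ M is deleted and x is heavy in the resulting graph, then either x has an unmatched neighbor, or x has a neighbor w whose mate z has degree less than 2√(2m); in either case x can be rematched so that all heavy vertices remain matched. -/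
set_option maxHeartbeats 1000000


/-- Let `G` (the graph resulting from the deletion, with `m` edges) carry a matching,
given by a partial `mate` function, and suppose the endpoint `x` of the deleted matched
edge is now unmatched and is heavy (degree at least `√(2m)`).  Then either `x` has an
unmatched neighbor, or `x` has a neighbor `w` whose mate `z` has degree less than
`2√(2m)` (so `x` can be rematched and all heavy vertices remain matched). -/
theorem stmt18 {V : Type*} [Fintype V] [DecidableEq V] (G : SimpleGraph V)
    [DecidableRel G.Adj]
    (mate : V → Option V)
    (hmate : ∀ v w, mate v = some w → G.Adj v w ∧ mate w = some v)
    (hm : 0 < G.edgeFinset.card)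
    (x : V) (hxfree : mate x = none)
    (hxheavy : Real.sqrt (2 * G.edgeFinset.card) ≤ (G.degree x : ℝ)) :
    (∃ w ∈ G.neighborSet x, mate w = none) ∨
    (∃ w ∈ G.neighborSet x, ∃ z, mate w = some z ∧
      (G.degree z : ℝ) < 2 * Real.sqrt (2 * G.edgeFinset.card)) := by
  by_contra hcon
  push_neg at hcon
  obtain ⟨h1, h2⟩ := hcon
  obtain ⟨m, hmdef⟩ : ∃ m, G.edgeFinset.card = m := ⟨_, rfl⟩
  obtain ⟨N, hN⟩ : ∃ N, G.neighborFinset x = N := ⟨_, rfl⟩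
  rw [hmdef] at hm hxheavy h2
  set g : V → V := fun w => (mate w).getD x with hg
  have hgN : ∀ w ∈ N, mate w = some (g w) := by
    intro w hw
    have hw' : w ∈ G.neighborSet x := by rw [← hN] at hw; simpa using hw
    cases hz : mate w with
    | none => exact absurd hz (h1 w hw')
    | some z => simp [hg, hz]
  have hinj : ∀ w ∈ N, ∀ w' ∈ N, g w = g w' → w = w' := by
    intro w hw w' hw' heq
    have h1' := (hmate w (g w) (hgN w hw)).2
    have h2' := (hmate w' (g w') (hgN w' hw')).2
    rw [heq] at h1'
    rw [h1'] at h2'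
    exact Option.some_inj.mp h2'
  have hsum : ∑ w ∈ N, G.degree (g w) ≤ 2 * m := by
    calc ∑ w ∈ N, G.degree (g w) = ∑ v ∈ N.image g, G.degree v :=
          (Finset.sum_image (f := fun v => G.degree v) hinj).symm
      _ ≤ ∑ v, G.degree v :=
          Finset.sum_le_sum_of_subset (Finset.subset_univ _)
      _ = 2 * m := by rw [SimpleGraph.sum_degrees_eq_twice_card_edges, hmdef]
  have hsumR : (∑ w ∈ N, (G.degree (g w) : ℝ)) ≤ 2 * m := by
    push_cast [← Nat.cast_sum]
    exact_mod_cast hsum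
  have hlow : (N.card : ℝ) * (2 * Real.sqrt (2 * m)) ≤ ∑ w ∈ N, (G.degree (g w) : ℝ) := by
    have := Finset.card_nsmul_le_sum N (fun w => (G.degree (g w) : ℝ)) (2 * Real.sqrt (2 * m))
      (fun w hw => h2 w (by rw [← hN] at hw; simpa using hw) (g w) (hgN w hw))
    simpa [nsmul_eq_mul] using this
  have hcard : (N.card : ℝ) = G.degree x := by
    rw [← hN, SimpleGraph.card_neighborFinset_eq_degree]
  have hsq : Real.sqrt (2 * m) * Real.sqrt (2 * m) = 2 * m := by
    apply Real.mul_self_sqrt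
    positivity
  have hs : Real.sqrt (2 * m) * (2 * Real.sqrt (2 * m)) ≤ 2 * m := by
    calc Real.sqrt (2 * m) * (2 * Real.sqrt (2 * m))
        ≤ (G.degree x : ℝ) * (2 * Real.sqrt (2 * m)) := by
          apply mul_le_mul_of_nonneg_right hxheavy
          positivity
      _ = (N.card : ℝ) * (2 * Real.sqrt (2 * m)) := by rw [hcard]
      _ ≤ _ := le_trans hlow hsumR
  have hm1 : (1 : ℝ) ≤ m := by exact_mod_cast hm
  nlinarith [hsq]
end
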